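/- Let B > 0 and a ∈ ℝ with a ≤ (π/B)², set λ_k = (kπ/B)² (so λ_k ≥ a for all k ≥ 1) and C_Γ = Γ(4/3)/Γ(2/3). For each k ≥ 1 let A_k : ℝ → ℂ be measurable and define F_k(τ) = (iτ)^{4/3} · ((iτ)^{2/3} + C_Γ(λ_k − a))^{−1} · A_k(τ) for τ ≠ 0 (principal-branch powers). Then ∑_{k≥1} k² ∫_ℝ (1 + |τ|)^{−2/3} |F_k(τ)|² dτ ≤ 4 ∑_{k≥1} k² ∫_ℝ (1 + |τ|)^{2/3} |A_k(τ)|² dτ. In particular, if the right-hand side is finite (i.e., the boundary data lies in H^{1/3}_t L²_y), then the left-hand side is finite (i.e., the forcing lies in H^{−1/3}_t L²_y). -/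

import Mathlib

open MeasureTheory Complex Real ENNReal

/-- The forcing multiplier applied to the `k`-th boundary coefficient:
`F_k(τ) = (iτ)^{4/3} ((iτ)^{2/3} + C_Γ(λ_k − a))⁻¹ A_k(τ)` with `λ_k = (kπ/B)²` and
`C_Γ = Γ(4/3)/Γ(2/3)`. -/
noncomputable def forcingMode (B a : ℝ) (A : ℕ → ℝ → ℂ) (k : ℕ) (τ : ℝ) : ℂ :=
  (Complex.I * (τ : ℂ)) ^ ((4 : ℂ) / 3) *
    ((Complex.I * (τ : ℂ)) ^ ((2 : ℂ) / 3) +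
      ((Real.Gamma (4 / 3) / Real.Gamma (2 / 3) *
        (((k : ℝ) * Real.pi / B) ^ 2 - a) : ℝ) : ℂ))⁻¹ * A k τ

/-!
Since `arg (iτ) = ±π/2`, the real part of `(iτ)^{2/3}` is `|τ|^{2/3} cos (π/3) = |τ|^{2/3}/2`.
As `C_Γ(λ_k − a) ≥ 0`, the denominator therefore has modulus at least `|τ|^{2/3}/2`, and the
multiplier is bounded by `2|τ|^{2/3} ≤ 2⟨τ⟩^{2/3}`. Squaring,
`⟨τ⟩^{-2/3} (2⟨τ⟩^{2/3})² = 4⟨τ⟩^{2/3}` gives the weighted inequality pointwise in `τ`, and it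
survives integration in `τ` and summation over `k`.
-/

lemma abs_arg_I_mul_ofReal {τ : ℝ} (hτ : τ ≠ 0) : |arg (I * τ)| = π / 2 := by
  rcases hτ.lt_or_gt with h | h
  · rw [arg_eq_neg_pi_div_two_iff.mpr ⟨by simp, by simpa using h⟩, abs_neg,
      abs_of_pos (by positivity)]
  · rw [arg_eq_pi_div_two_iff.mpr ⟨by simp, by simpa using h⟩, abs_of_pos (by positivity)]

lemma re_I_mul_ofReal_cpow {τ : ℝ} (hτ : τ ≠ 0) (p : ℝ) :
    ((I * τ) ^ (p : ℂ)).re = |τ| ^ p * Real.cos (p * π / 2) := by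
  rw [cpow_ofReal_re, ← Real.cos_abs, abs_mul, abs_arg_I_mul_ofReal hτ, ← Real.cos_abs (p * π / 2),
    abs_div, abs_mul, abs_of_pos pi_pos, abs_two]
  simp only [norm_mul, norm_I, norm_real, Real.norm_eq_abs, one_mul]
  ring_nf

lemma norm_I_mul_ofReal_cpow_mul_inv_le {p c : ℝ} (hp : 0 < p) (hp1 : p < 1) (hc : 0 ≤ c)
    (τ : ℝ) :
    ‖(I * τ) ^ (2 * p : ℂ) * ((I * τ) ^ (p : ℂ) + c)⁻¹‖ ≤ |τ| ^ p / Real.cos (p * π / 2) := by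
  rcases eq_or_ne τ 0 with rfl | hτ
  · have : (2 * p : ℂ) ≠ 0 := by exact_mod_cast (by positivity : 2 * p ≠ 0)
    simp [zero_cpow this, Real.zero_rpow hp.ne']
  have hcos : 0 < Real.cos (p * π / 2) :=
    Real.cos_pos_of_mem_Ioo ⟨by nlinarith [pi_pos], by nlinarith [pi_pos]⟩
  have hlow : |τ| ^ p * Real.cos (p * π / 2) ≤ ‖(I * τ) ^ (p : ℂ) + c‖ := calc
    _ ≤ ((I * τ) ^ (p : ℂ) + c).re := by simp [re_I_mul_ofReal_cpow hτ, hc]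
    _ ≤ _ := re_le_norm _
  have hnum : ‖(I * τ) ^ (2 * p : ℂ)‖ = |τ| ^ p * |τ| ^ p := by
    rw [← Real.rpow_add (abs_pos.mpr hτ), ← two_mul, show (2 * p : ℂ) = ((2 * p : ℝ) : ℂ) by
      push_cast; ring, norm_cpow_real]
    simp
  have hpos : 0 < |τ| ^ p * Real.cos (p * π / 2) := by positivity
  rw [norm_mul, norm_inv, hnum, ← div_eq_mul_inv, div_le_div_iff₀ (hpos.trans_le hlow) hcos]
  nlinarith [Real.rpow_nonneg (abs_nonneg τ) p]

lemma ofReal_rpow_neg_mul_nnnorm_sq_le {E F : Type*}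
    [SeminormedAddGroup E] [SeminormedAddGroup F]
    {w s C : ℝ} (hw : 0 < w) {x : E} {y : F} (h : ‖x‖ ≤ C * w ^ s * ‖y‖) :
    ENNReal.ofReal (w ^ (-s)) * (‖x‖₊ : ℝ≥0∞) ^ 2 ≤
      ENNReal.ofReal (C ^ 2) * (ENNReal.ofReal (w ^ s) * (‖y‖₊ : ℝ≥0∞) ^ 2) := by
  have hreal : w ^ (-s) * ‖x‖ ^ 2 ≤ C ^ 2 * (w ^ s * ‖y‖ ^ 2) := calc
    _ ≤ w ^ (-s) * (C * w ^ s * ‖y‖) ^ 2 := by gcongr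
    _ = (w ^ (-s) * w ^ s) * (C ^ 2 * (w ^ s * ‖y‖ ^ 2)) := by ring
    _ = C ^ 2 * (w ^ s * ‖y‖ ^ 2) := by
      rw [← Real.rpow_add hw, neg_add_cancel, Real.rpow_zero, one_mul]
  simp only [← enorm_eq_nnnorm, ← ofReal_norm, ← ENNReal.ofReal_pow (norm_nonneg _)]
  rw [← ENNReal.ofReal_mul (by positivity), ← ENNReal.ofReal_mul (by positivity),
    ← ENNReal.ofReal_mul (by positivity)]
  exact ENNReal.ofReal_le_ofReal hreal

lemma gamma_ratio_mul_eigenvalue_sub_nonneg {B a : ℝ} (ha : a ≤ (π / B) ^ 2) {k : ℕ} (hk : 1 ≤ k) :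
    0 ≤ Real.Gamma (4 / 3) / Real.Gamma (2 / 3) * (((k : ℝ) * π / B) ^ 2 - a) := by
  have hΓ : 0 < Real.Gamma (4 / 3) / Real.Gamma (2 / 3) :=
    div_pos (Real.Gamma_pos_of_pos (by norm_num)) (Real.Gamma_pos_of_pos (by norm_num))
  have heig : (π / B) ^ 2 ≤ ((k : ℝ) * π / B) ^ 2 := by
    rw [mul_div_assoc, mul_pow]
    exact le_mul_of_one_le_left (sq_nonneg _) (one_le_pow₀ (by exact_mod_cast hk))
  exact mul_nonneg hΓ.le (by linarith)

lemma norm_forcingMode_le {B a : ℝ} (ha : a ≤ (π / B) ^ 2) (A : ℕ → ℝ → ℂ) {k : ℕ} (hk : 1 ≤ k)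
    (τ : ℝ) : ‖forcingMode B a A k τ‖ ≤ 2 * (1 + |τ|) ^ ((2 : ℝ) / 3) * ‖A k τ‖ := by
  have hmult := norm_I_mul_ofReal_cpow_mul_inv_le (p := 2 / 3) (by norm_num) (by norm_num)
    (gamma_ratio_mul_eigenvalue_sub_nonneg ha hk) τ
  rw [show 2 / 3 * π / 2 = π / 3 by ring, Real.cos_pi_div_three] at hmult
  rw [show ((2 / 3 : ℝ) : ℂ) = 2 / 3 by push_cast; rfl, show (2 : ℂ) * (2 / 3) = 4 / 3 by norm_num]
    at hmult
  rw [forcingMode, norm_mul]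
  gcongr
  calc _ ≤ |τ| ^ ((2 : ℝ) / 3) / (1 / 2) := hmult
    _ = 2 * |τ| ^ ((2 : ℝ) / 3) := by ring
    _ ≤ 2 * (1 + |τ|) ^ ((2 : ℝ) / 3) := by gcongr; linarith

lemma weighted_forcingMode_le {B a : ℝ} (ha : a ≤ (π / B) ^ 2) (A : ℕ → ℝ → ℂ) {k : ℕ}
    (hk : 1 ≤ k) (τ : ℝ) :
    ENNReal.ofReal ((1 + |τ|) ^ (-(2 : ℝ) / 3)) * (‖forcingMode B a A k τ‖₊ : ℝ≥0∞) ^ 2 ≤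
      4 * (ENNReal.ofReal ((1 + |τ|) ^ ((2 : ℝ) / 3)) * (‖A k τ‖₊ : ℝ≥0∞) ^ 2) := by
  have h := ofReal_rpow_neg_mul_nnnorm_sq_le (by positivity) (norm_forcingMode_le ha A hk τ)
  rwa [neg_div, show (4 : ℝ≥0∞) = ENNReal.ofReal (2 ^ 2) by norm_num]

lemma tsum_mul_lintegral_le_const_mul {ι α : Type*} [MeasurableSpace α] {μ : Measure α}
    {c : ι → ℝ≥0∞} {f g : ι → α → ℝ≥0∞} {C : ℝ≥0∞} (hC : C ≠ ⊤) (h : ∀ i x, f i x ≤ C * g i x) :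
    ∑' i, c i * ∫⁻ x, f i x ∂μ ≤ C * ∑' i, c i * ∫⁻ x, g i x ∂μ := by
  rw [← ENNReal.tsum_mul_left]
  refine ENNReal.tsum_le_tsum fun i => ?_
  rw [mul_left_comm, ← lintegral_const_mul' _ _ hC]
  gcongr _ * ?_
  exact lintegral_mono (h i)

theorem forcing_regularity_general (B a : ℝ) (ha : a ≤ (Real.pi / B) ^ 2)
    (A : ℕ → ℝ → ℂ) :
    (∑' k : ℕ+, ((k : ℝ≥0∞) ^ 2 *
        ∫⁻ τ : ℝ, ENNReal.ofReal ((1 + |τ|) ^ (-(2 : ℝ) / 3)) *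
          (‖forcingMode B a A k τ‖₊ : ℝ≥0∞) ^ 2)) ≤
      4 * ∑' k : ℕ+, ((k : ℝ≥0∞) ^ 2 *
        ∫⁻ τ : ℝ, ENNReal.ofReal ((1 + |τ|) ^ ((2 : ℝ) / 3)) *
          (‖A k τ‖₊ : ℝ≥0∞) ^ 2) ∧
    ((∑' k : ℕ+, ((k : ℝ≥0∞) ^ 2 *
        ∫⁻ τ : ℝ, ENNReal.ofReal ((1 + |τ|) ^ ((2 : ℝ) / 3)) *
          (‖A k τ‖₊ : ℝ≥0∞) ^ 2)) ≠ ⊤ →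
      (∑' k : ℕ+, ((k : ℝ≥0∞) ^ 2 *
        ∫⁻ τ : ℝ, ENNReal.ofReal ((1 + |τ|) ^ (-(2 : ℝ) / 3)) *
          (‖forcingMode B a A k τ‖₊ : ℝ≥0∞) ^ 2)) ≠ ⊤) := by
  have main := tsum_mul_lintegral_le_const_mul (μ := volume) (c := fun k : ℕ+ => (k : ℝ≥0∞) ^ 2)
    ofNat_ne_top fun k τ => weighted_forcingMode_le ha A k.pos τ
  exact ⟨main, fun hfin => ne_top_of_le_ne_top (mul_ne_top ofNat_ne_top hfin) main⟩

/-- If the boundary data lies in `H^{1/3}_t L²_y`, then the forcing lies in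
`H^{−1/3}_t L²_y`: with `λ_k = (kπ/B)² ≥ a` and `F_k` as above,
`∑_{k≥1} k² ∫ ⟨τ⟩^{−2/3} |F_k(τ)|² dτ ≤ 4 ∑_{k≥1} k² ∫ ⟨τ⟩^{2/3} |A_k(τ)|² dτ`;
in particular finiteness of the right-hand side forces finiteness of the left-hand side. -/
theorem forcing_regularity (B a : ℝ) (hB : 0 < B) (ha : a ≤ (Real.pi / B) ^ 2)
    (A : ℕ → ℝ → ℂ) (hA : ∀ k, Measurable (A k)) :
    (∑' k : ℕ+, ((k : ℝ≥0∞) ^ 2 *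
        ∫⁻ τ : ℝ, ENNReal.ofReal ((1 + |τ|) ^ (-(2 : ℝ) / 3)) *
          (‖forcingMode B a A k τ‖₊ : ℝ≥0∞) ^ 2)) ≤
      4 * ∑' k : ℕ+, ((k : ℝ≥0∞) ^ 2 *
        ∫⁻ τ : ℝ, ENNReal.ofReal ((1 + |τ|) ^ ((2 : ℝ) / 3)) *
          (‖A k τ‖₊ : ℝ≥0∞) ^ 2) ∧
    ((∑' k : ℕ+, ((k : ℝ≥0∞) ^ 2 *
        ∫⁻ τ : ℝ, ENNReal.ofReal ((1 + |τ|) ^ ((2 : ℝ) / 3)) *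
          (‖A k τ‖₊ : ℝ≥0∞) ^ 2)) ≠ ⊤ →
      (∑' k : ℕ+, ((k : ℝ≥0∞) ^ 2 *
        ∫⁻ τ : ℝ, ENNReal.ofReal ((1 + |τ|) ^ (-(2 : ℝ) / 3)) *
          (‖forcingMode B a A k τ‖₊ : ℝ≥0∞) ^ 2)) ≠ ⊤) :=
  forcing_regularity_general B a ha A
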